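/- For elements x, y of C, the product of the principal ideals generated by the diagonal generators satisfies (A[xx]A)·(A[yy]A) = A[xy]A if x ≼ y, and equals 0 otherwise. In particular, x ≼ y if and only if (A[xx]A)·(A[yy]A) ≠ 0. -/

import Mathlib

open Classical in
/-- The generator `[xy]` of the incidence algebra over `ℂ`:
the "matrix unit" supported at `(x, y)` (zero unless `x ≤ y`). -/
noncomputable def gen {C : Type*} [PartialOrder C] (x y : C) :
    IncidenceAlgebra ℂ C :=
  ⟨fun a b => if a = x ∧ b = y ∧ x ≤ y then 1 else 0, by
    intro a b hab
    try simp only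
    rw [if_neg]
    rintro ⟨rfl, rfl, hxy⟩
    exact hab hxy⟩

/-- The product of two two-sided ideals: the two-sided ideal generated by pairwise products. -/
noncomputable def idealProd {R : Type*} [NonUnitalNonAssocRing R] (I J : TwoSidedIdeal R) :
    TwoSidedIdeal R :=
  TwoSidedIdeal.span {z | ∃ a ∈ I, ∃ b ∈ J, z = a * b}

section Aux

open Finset TwoSidedIdeal

variable {C : Type*} [Fintype C] [PartialOrder C] [DecidableEq C] [LocallyFiniteOrder C]

end Aux

section AuxMin
variable {C : Type*} [PartialOrder C]
open Classical in
lemma gen_apply (x y a b : C) :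
    gen x y a b = if a = x ∧ b = y ∧ x ≤ y then 1 else 0 := rfl
end AuxMin

section Aux2
open Finset TwoSidedIdeal
variable {C : Type*} [Fintype C] [PartialOrder C] [DecidableEq C] [LocallyFiniteOrder C]

lemma gen_mul_gen {x y z : C} (h1 : x ≤ y) (h2 : y ≤ z) :
    (gen x y : IncidenceAlgebra ℂ C) * gen y z = gen x z := by
  ext a b hab
  rw [IncidenceAlgebra.mul_apply]
  by_cases hax : a = x
  · by_cases hbz : b = z
    · subst hax; subst hbz
      rw [Finset.sum_eq_single y]
      · simp [gen_apply, h1, h2, le_trans h1 h2]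
      · intro w hw hwy
        simp [gen_apply, hwy]
      · intro hy
        exact absurd (Finset.mem_Icc.mpr ⟨h1, h2⟩) hy
    · rw [Finset.sum_eq_zero, eq_comm]
      · simp [gen_apply, hbz]
      · intro w hw
        simp [gen_apply, hbz]
  · rw [Finset.sum_eq_zero, eq_comm]
    · simp [gen_apply, hax]
    · intro w hw
      simp [gen_apply, hax]

/-- The two-sided ideal of elements supported on `{(a,b) | a ≤ x, y ≤ b}`. -/
noncomputable def Jset (x y : C) : TwoSidedIdeal (IncidenceAlgebra ℂ C) :=
  TwoSidedIdeal.mk' {f | ∀ a b, f a b ≠ 0 → a ≤ x ∧ y ≤ b}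
    (fun a b h => absurd rfl h)
    (fun {f g} hf hg a b h => by
      rw [IncidenceAlgebra.add_apply] at h
      by_cases h1 : f a b ≠ 0
      · exact hf a b h1
      · push_neg at h1
        exact hg a b (by rwa [h1, zero_add] at h))
    (fun {f} hf a b h => hf a b (by simpa using h))
    (fun {f g} hg a b h => by
      rw [IncidenceAlgebra.mul_apply] at h
      obtain ⟨w, hw, hne⟩ := Finset.exists_ne_zero_of_sum_ne_zero h
      have := hg w b (right_ne_zero_of_mul hne)
      exact ⟨(Finset.mem_Icc.mp hw).1.trans this.1, this.2⟩)
    (fun {f g} hf a b h => by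
      rw [IncidenceAlgebra.mul_apply] at h
      obtain ⟨w, hw, hne⟩ := Finset.exists_ne_zero_of_sum_ne_zero h
      have := hf a w (left_ne_zero_of_mul hne)
      exact ⟨this.1, this.2.trans (Finset.mem_Icc.mp hw).2⟩)

lemma mem_Jset {x y : C} {f : IncidenceAlgebra ℂ C} :
    f ∈ Jset x y ↔ ∀ a b, f a b ≠ 0 → a ≤ x ∧ y ≤ b :=
  TwoSidedIdeal.mem_mk' _ _ _ _ _ _ f

lemma gen_mem_Jset {x y x' y' : C} (hx : x ≤ x') (hy : y' ≤ y) :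
    gen x y ∈ Jset (C := C) x' y' := by
  rw [mem_Jset]
  intro a b h
  rw [gen_apply] at h
  by_cases hc : a = x ∧ b = y ∧ x ≤ y
  · obtain ⟨rfl, rfl, -⟩ := hc
    exact ⟨hx, hy⟩
  · rw [if_neg hc] at h
    exact absurd rfl h

lemma ia_sum_apply {ι : Type*} (s : Finset ι) (F : ι → IncidenceAlgebra ℂ C) (a b : C) :
    (∑ i ∈ s, F i) a b = ∑ i ∈ s, F i a b := by
  induction s using Finset.cons_induction with
  | empty => rfl
  | cons i s hi ih =>
      rw [Finset.sum_cons, Finset.sum_cons, IncidenceAlgebra.add_apply, ih]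

lemma ia_decomp (f : IncidenceAlgebra ℂ C) :
    f = ∑ p : C × C, f p.1 p.2 • gen p.1 p.2 := by
  ext a b hab
  rw [ia_sum_apply, Finset.sum_eq_single ((a, b) : C × C)]
  · rw [IncidenceAlgebra.constSMul_apply, gen_apply, if_pos ⟨rfl, rfl, hab⟩,
      smul_eq_mul, mul_one]
  · intro p _ hp
    rw [IncidenceAlgebra.constSMul_apply, gen_apply, if_neg, smul_zero]
    rintro ⟨rfl, rfl, -⟩
    exact hp rfl
  · intro h
    exact absurd (Finset.mem_univ _) h

lemma smul_mul_ia (c : ℂ) (u v : IncidenceAlgebra ℂ C) : (c • u) * v = c • (u * v) := by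
  ext a b _
  rw [IncidenceAlgebra.constSMul_apply, IncidenceAlgebra.mul_apply,
    IncidenceAlgebra.mul_apply, Finset.smul_sum]
  refine Finset.sum_congr rfl fun w _ => ?_
  rw [IncidenceAlgebra.constSMul_apply, smul_eq_mul, smul_eq_mul, mul_assoc]

lemma sum_mem_tsi {ι : Type*} (I : TwoSidedIdeal (IncidenceAlgebra ℂ C)) (s : Finset ι)
    (F : ι → IncidenceAlgebra ℂ C) (h : ∀ i ∈ s, F i ∈ I) : (∑ i ∈ s, F i) ∈ I := by
  induction s using Finset.cons_induction with
  | empty => exact I.zero_mem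
  | cons i s hi ih =>
      rw [Finset.sum_cons]
      exact I.add_mem (h i (Finset.mem_cons_self i s)) (ih fun j hj => h j (Finset.mem_cons_of_mem hj))

lemma span_gen_eq {x y : C} (h : x ≤ y) :
    TwoSidedIdeal.span {gen x y} = Jset (C := C) x y := by
  refine le_antisymm ?_ ?_
  · intro f hf
    exact mem_span_iff.mp hf _ (by
      rw [Set.singleton_subset_iff]
      exact gen_mem_Jset le_rfl le_rfl)
  · intro f hf
    rw [mem_Jset] at hf
    rw [ia_decomp f]
    refine sum_mem_tsi _ _ _ fun p _ => ?_
    by_cases hp : f p.1 p.2 = 0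
    · rw [hp, zero_smul]
      exact TwoSidedIdeal.zero_mem _
    · obtain ⟨h1, h2⟩ := hf p.1 p.2 hp
      have key : f p.1 p.2 • gen p.1 p.2
          = ((f p.1 p.2 • gen p.1 x) * gen x y) * gen y p.2 := by
        rw [smul_mul_ia, smul_mul_ia, gen_mul_gen h1 h, gen_mul_gen (h1.trans h) h2]
      rw [key]
      exact TwoSidedIdeal.mul_mem_right _ _ _
        (TwoSidedIdeal.mul_mem_left _ _ _ (subset_span rfl))

lemma gen_ne_zero {x y : C} (h : x ≤ y) : (gen x y : IncidenceAlgebra ℂ C) ≠ 0 := by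
  intro hf
  have : gen x y x y = (0 : IncidenceAlgebra ℂ C) x y := by rw [hf]
  rw [gen_apply, if_pos ⟨rfl, rfl, h⟩, IncidenceAlgebra.zero_apply] at this
  exact one_ne_zero this

lemma prod_eq_of_le {x y : C} (h : x ≤ y) :
    idealProd (TwoSidedIdeal.span {gen x x}) (TwoSidedIdeal.span {gen y y}) =
      TwoSidedIdeal.span {gen (C := C) x y} := by
  rw [span_gen_eq h]
  refine le_antisymm ?_ ?_
  · intro f hf
    refine mem_span_iff.mp hf _ ?_
    rintro z ⟨a, ha, b, hb, rfl⟩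
    rw [span_gen_eq (le_refl x), mem_Jset] at ha
    rw [span_gen_eq (le_refl y), mem_Jset] at hb
    rw [SetLike.mem_coe, mem_Jset]
    intro u v huv
    rw [IncidenceAlgebra.mul_apply] at huv
    obtain ⟨w, hw, hne⟩ := Finset.exists_ne_zero_of_sum_ne_zero huv
    exact ⟨(ha u w (left_ne_zero_of_mul hne)).1, (hb w v (right_ne_zero_of_mul hne)).2⟩
  · rw [← span_gen_eq h]
    intro f hf
    refine mem_span_iff.mp hf _ ?_
    rw [Set.singleton_subset_iff]
    refine subset_span ⟨gen x y, ?_, gen y y, subset_span rfl, (gen_mul_gen h le_rfl).symm⟩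
    rw [span_gen_eq (le_refl x)]
    exact gen_mem_Jset le_rfl h

lemma prod_eq_bot_of_not_le {x y : C} (h : ¬ x ≤ y) :
    idealProd (TwoSidedIdeal.span {gen x x}) (TwoSidedIdeal.span {gen (C := C) y y}) = ⊥ := by
  rw [eq_bot_iff]
  intro f hf
  refine mem_span_iff.mp hf ⊥ ?_
  rintro z ⟨a, ha, b, hb, rfl⟩
  rw [span_gen_eq (le_refl x), mem_Jset] at ha
  rw [span_gen_eq (le_refl y), mem_Jset] at hb
  rw [SetLike.mem_coe, TwoSidedIdeal.mem_bot _]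
  ext u v _
  rw [IncidenceAlgebra.mul_apply, IncidenceAlgebra.zero_apply]
  refine Finset.sum_eq_zero fun w _ => ?_
  by_contra hne
  exact h (((ha u w (left_ne_zero_of_mul hne)).2).trans
    ((hb w v (right_ne_zero_of_mul hne)).1))

end Aux2

/-- `(A[xx]A) · (A[yy]A) = A[xy]A` if `x ≤ y` and `0` otherwise; in particular
`x ≤ y` iff the product is nonzero. -/
theorem diagonal_principal_ideal_product {C : Type*} [Fintype C] [PartialOrder C] [DecidableEq C] [LocallyFiniteOrder C] (x y : C) :
    ((x ≤ y → idealProd (TwoSidedIdeal.span {gen x x}) (TwoSidedIdeal.span {gen y y}) =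
        TwoSidedIdeal.span {gen x y}) ∧
     (¬ x ≤ y → idealProd (TwoSidedIdeal.span {gen x x}) (TwoSidedIdeal.span {gen y y}) =
        ⊥)) ∧
    (x ≤ y ↔
      idealProd (TwoSidedIdeal.span {gen x x}) (TwoSidedIdeal.span {gen y y}) ≠ ⊥) := by
  refine ⟨⟨fun h => prod_eq_of_le h, fun h => prod_eq_bot_of_not_le h⟩, ?_⟩
  constructor
  · intro h hbot
    rw [prod_eq_of_le h] at hbot
    have : gen x y ∈ (⊥ : TwoSidedIdeal (IncidenceAlgebra ℂ C)) := by
      rw [← hbot]; exact TwoSidedIdeal.subset_span rfl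
    exact gen_ne_zero h ((TwoSidedIdeal.mem_bot _).mp this)
  · intro h
    by_contra hxy
    exact h (prod_eq_bot_of_not_le hxy)
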